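/- For every real number α and every natural number n, applying the matrix (U_a(α))^n · U_c · (U_a(α))^n to the standard basis vector e₀ of ℝ⁴ yields exactly the standard basis vector e₂ (i.e., when the two exponents are equal, the resulting state is e₂ with certainty). -/

import Mathlib

open Real Matrix

/-- The matrix `U_a(α)` from the paper. -/
noncomputable def Ua (α : ℝ) : Matrix (Fin 4) (Fin 4) ℝ :=
  !![Real.cos α, -Real.sin α, 0, 0;
     Real.sin α,  Real.cos α, 0, 0;
     0, 0,  Real.cos α, Real.sin α;
     0, 0, -Real.sin α, Real.cos α]

/-- The matrix `U_c` from the paper. -/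
def Uc : Matrix (Fin 4) (Fin 4) ℝ :=
  !![0, 0, 1, 0;
     0, 0, 0, 1;
     1, 0, 0, 0;
     0, 1, 0, 0]

/-- The standard basis vectors of `ℝ⁴`. -/
noncomputable def e (i : Fin 4) : Fin 4 → ℝ := Pi.single i 1

/-! `U_a(α)` rotates the planes `⟨e₀, e₁⟩` and `⟨e₂, e₃⟩` by `α` and `-α`, and `U_c` swaps the two
planes, so conjugating by `U_c` turns `U_a(α)` into `U_a(-α)`. Hence `U_a(β) U_c U_a(β) = U_c` for
every `β`, in particular for `β = nα`, and `U_c e₀ = e₂`. -/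

theorem Ua_add (α β : ℝ) : Ua (α + β) = Ua α * Ua β := by
  ext i j
  fin_cases i <;> fin_cases j <;>
    simp [Ua, Matrix.mul_apply, Fin.sum_univ_four, Real.cos_add, Real.sin_add] <;> ring

theorem Ua_zero : Ua 0 = 1 := by
  ext i j
  fin_cases i <;> fin_cases j <;> simp [Ua]

theorem Ua_pow (α : ℝ) (n : ℕ) : Ua α ^ n = Ua (n * α) := by
  induction n with
  | zero => simp [Ua_zero]
  | succ n ih => rw [pow_succ, ih, ← Ua_add, Nat.cast_succ, add_one_mul]

theorem Uc_mul_Ua (α : ℝ) : Uc * Ua α = Ua (-α) * Uc := by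
  ext i j
  fin_cases i <;> fin_cases j <;> simp [Ua, Uc, Matrix.mul_apply, Fin.sum_univ_four]

theorem Ua_mul_Uc_mul_Ua (α : ℝ) : Ua α * Uc * Ua α = Uc := by
  rw [mul_assoc, Uc_mul_Ua, ← mul_assoc, ← Ua_add, add_neg_cancel, Ua_zero, one_mul]

theorem Uc_mulVec_e_zero : Uc *ᵥ e 0 = e 2 := by
  ext i
  fin_cases i <;> simp [Uc, e, Matrix.mulVec, dotProduct, Fin.sum_univ_four]

theorem equal_exponents_give_e2 (α : ℝ) (n : ℕ) :
    ((Ua α) ^ n * Uc * (Ua α) ^ n).mulVec (e 0) = e 2 := by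
  rw [Ua_pow, Ua_mul_Uc_mul_Ua, Uc_mulVec_e_zero]
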